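/- Fix z ∈ ℂ with |z| < 1 and let w := √(ε(1−z)) denote the principal complex square root of ε(1−z). Define ā^± := w ± c(1−z) and ē_t^± := exp(± w (T−t)) for t ∈ [0,T], and S_t := w · (ā⁺ ē_t⁺ − ā⁻ ē_t⁻) / (ā⁺ ē_t⁺ + ā⁻ ē_t⁻). Then ā⁺ ē_t⁺ + ā⁻ ē_t⁻ ≠ 0 for all t ∈ [0,T], the function t ↦ S_t is differentiable with (d/dt) S_t = (S_t)² − ε(1−z), and S_T = c(1−z). -/

import Mathlib

/-- `w := (ε(1−z))^{1/2}`, the principal complex square root of `ε(1−z)`. -/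
noncomputable def wGen (ε : ℝ) (z : ℂ) : ℂ := ((ε : ℂ) * (1 - z)) ^ ((1 : ℂ) / 2)

/-- `ā⁺ := w + c(1−z)`. -/
noncomputable def aBarPlus (ε c : ℝ) (z : ℂ) : ℂ := wGen ε z + (c : ℂ) * (1 - z)

/-- `ā⁻ := w − c(1−z)`. -/
noncomputable def aBarMinus (ε c : ℝ) (z : ℂ) : ℂ := wGen ε z - (c : ℂ) * (1 - z)

/-- `ē_t⁺ := exp(w(T−t))`. -/
noncomputable def eBarPlus (T ε : ℝ) (z : ℂ) (t : ℝ) : ℂ :=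
  Complex.exp (wGen ε z * ((T : ℂ) - (t : ℂ)))

/-- `ē_t⁻ := exp(−w(T−t))`. -/
noncomputable def eBarMinus (T ε : ℝ) (z : ℂ) (t : ℝ) : ℂ :=
  Complex.exp (-wGen ε z * ((T : ℂ) - (t : ℂ)))

/-- `S_t := w (ā⁺ē_t⁺ − ā⁻ē_t⁻)/(ā⁺ē_t⁺ + ā⁻ē_t⁻)`. -/
noncomputable def SGen (T ε c : ℝ) (z : ℂ) (t : ℝ) : ℂ :=
  wGen ε z *
    ((aBarPlus ε c z * eBarPlus T ε z t - aBarMinus ε c z * eBarMinus T ε z t) /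
      (aBarPlus ε c z * eBarPlus T ε z t + aBarMinus ε c z * eBarMinus T ε z t))

/-! `S = w N / D` where `N, D` are the combinations `ā⁺ē⁺ ∓ ā⁻ē⁻`; since `(ē^±)' = ∓ w ē^±`
they satisfy `N' = -w D`, `D' = -w N`, and the quotient rule turns this into `S' = S² - w²`.

For the denominator: `Re w > 0` because `ε(1 - z)` has positive real part, and writing
`c(1 - z) = (c/ε) w²` gives `ā^± = w (1 ± (c/ε) w)`, hence `‖ā⁻‖ ≤ ‖ā⁺‖`. As `‖ē_t⁺‖ ≥ 1 ≥ ‖ē_t⁻‖`,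
strictly for `t < T`, the two terms can only cancel at `t = T`, where the denominator is
`ā⁺ + ā⁻ = 2w ≠ 0`. -/

open Complex

theorem norm_one_sub_le_norm_one_add {u : ℂ} (hu : 0 ≤ u.re) : ‖1 - u‖ ≤ ‖1 + u‖ := by
  rw [norm_def, norm_def]
  apply Real.sqrt_le_sqrt
  simp only [normSq_apply, sub_re, add_re, sub_im, add_im, one_re, one_im]
  nlinarith

theorem add_mul_exp_ne_zero {w a b : ℂ} {τ : ℝ} (hw : 0 < w.re) (hτ : 0 ≤ τ)
    (hab : ‖b‖ ≤ ‖a‖) (hsum : a + b ≠ 0) : a * exp (w * τ) + b * exp (-w * τ) ≠ 0 := by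
  rcases hτ.eq_or_lt with rfl | hτ
  · simpa using hsum
  intro h
  have hnorm : ‖a‖ * Real.exp (w.re * τ) = ‖b‖ * Real.exp (-(w.re * τ)) := by
    simpa [norm_exp] using congrArg norm (eq_neg_of_add_eq_zero_left h)
  have hexp : Real.exp (-(w.re * τ)) < Real.exp (w.re * τ) :=
    Real.exp_lt_exp.2 (neg_lt_self (mul_pos hw hτ))
  have ha : a = 0 := by
    by_contra ha
    have := norm_pos_iff.2 ha
    nlinarith [Real.exp_pos (-(w.re * τ))]
  have hb : b = 0 := norm_le_zero_iff.1 (by simpa [ha] using hab)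
  exact hsum (by simp [ha, hb])

theorem HasDerivAt.riccati {N D : ℝ → ℂ} {w : ℂ} {t : ℝ} (hN : HasDerivAt N (-w * D t) t)
    (hD : HasDerivAt D (-w * N t) t) (hD0 : D t ≠ 0) :
    HasDerivAt (fun s => w * (N s / D s)) ((w * (N t / D t)) ^ 2 - w ^ 2) t := by
  refine ((hN.div hD hD0).const_mul w).congr_deriv ?_
  field_simp
  ring

theorem hasDerivAt_exp_mul_sub (w : ℂ) (T t : ℝ) :
    HasDerivAt (fun s : ℝ => exp (w * (T - s))) (-w * exp (w * (T - t))) t := by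
  have h : HasDerivAt (fun u : ℂ => w * (T - u)) (-w) t := by
    simpa using ((hasDerivAt_id (t : ℂ)).const_sub (T : ℂ)).const_mul w
  simpa [mul_comm] using h.cexp.comp_ofReal

theorem re_cpow_one_half_pos {x : ℂ} (hx : 0 < x.re) : 0 < (x ^ ((1 : ℂ) / 2)).re := by
  rw [one_div, cpow_inv_two_re]
  apply Real.sqrt_pos.2
  linarith [x.re_le_norm]

theorem cpow_one_half_sq (x : ℂ) : (x ^ ((1 : ℂ) / 2)) ^ 2 = x := by
  rw [one_div]; exact_mod_cast cpow_ofNat_inv_pow x 2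

theorem wGen_sq (ε : ℝ) (z : ℂ) : wGen ε z ^ 2 = ε * (1 - z) :=
  cpow_one_half_sq _

theorem re_wGen_pos {ε : ℝ} {z : ℂ} (hε : 0 < ε) (hz : ‖z‖ < 1) : 0 < (wGen ε z).re := by
  apply re_cpow_one_half_pos
  have : z.re < 1 := (re_le_norm z).trans_lt hz
  simpa using mul_pos hε (sub_pos.2 this)

theorem norm_aBarMinus_le_norm_aBarPlus {ε c : ℝ} {z : ℂ} (hε : 0 < ε) (hc : 0 ≤ c)
    (hz : ‖z‖ < 1) : ‖aBarMinus ε c z‖ ≤ ‖aBarPlus ε c z‖ := by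
  set w := wGen ε z
  have hb : (c : ℂ) * (1 - z) = w * ((c / ε : ℝ) * w) := by
    rw [← mul_assoc, mul_comm w, mul_assoc, ← sq, wGen_sq]
    push_cast
    field_simp [ofReal_ne_zero.2 hε.ne']
  have hre : 0 ≤ (((c / ε : ℝ) : ℂ) * w).re := by
    rw [re_ofReal_mul]; exact mul_nonneg (div_nonneg hc hε.le) (re_wGen_pos hε hz).le
  rw [aBarMinus, aBarPlus, hb, ← mul_one_sub, ← mul_one_add, norm_mul, norm_mul]
  exact mul_le_mul_of_nonneg_left (norm_one_sub_le_norm_one_add hre) (norm_nonneg w)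

theorem aBarPlus_add_aBarMinus (ε c : ℝ) (z : ℂ) :
    aBarPlus ε c z + aBarMinus ε c z = 2 * wGen ε z := by
  rw [aBarPlus, aBarMinus]; ring

theorem hasDerivAt_SGen (T ε c : ℝ) (z : ℂ) {t : ℝ}
    (hD : aBarPlus ε c z * eBarPlus T ε z t + aBarMinus ε c z * eBarMinus T ε z t ≠ 0) :
    HasDerivAt (SGen T ε c z) (SGen T ε c z t ^ 2 - wGen ε z ^ 2) t := by
  have hP : HasDerivAt (eBarPlus T ε z) (-wGen ε z * eBarPlus T ε z t) t :=
    hasDerivAt_exp_mul_sub _ T t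
  have hM : HasDerivAt (eBarMinus T ε z) (wGen ε z * eBarMinus T ε z t) t :=
    (hasDerivAt_exp_mul_sub (-wGen ε z) T t).congr_deriv (by rw [neg_neg]; rfl)
  refine HasDerivAt.riccati ?_ ?_ hD
  · exact ((hP.const_mul _).sub (hM.const_mul _)).congr_deriv (by ring)
  · exact ((hP.const_mul _).add (hM.const_mul _)).congr_deriv (by ring)

theorem SGen_self (T ε c : ℝ) (z : ℂ) (hw : wGen ε z ≠ 0) : SGen T ε c z T = c * (1 - z) := by
  have hsum := aBarPlus_add_aBarMinus ε c z
  simp only [SGen, eBarPlus, eBarMinus, sub_self, mul_zero, exp_zero, mul_one, hsum]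
  rw [aBarPlus, aBarMinus]
  field_simp
  ring

theorem generating_function_explicit_solution_general
    (T ε c : ℝ) (hε : 0 < ε) (hc : 0 ≤ c)
    (z : ℂ) (hz : ‖z‖ < 1) :
    (∀ t ∈ Set.Icc (0:ℝ) T,
      aBarPlus ε c z * eBarPlus T ε z t + aBarMinus ε c z * eBarMinus T ε z t ≠ 0) ∧
    (∀ t ∈ Set.Icc (0:ℝ) T,
      HasDerivWithinAt (fun s : ℝ => SGen T ε c z s)
        ((SGen T ε c z t) ^ 2 - (ε : ℂ) * (1 - z)) (Set.Icc (0:ℝ) T) t) ∧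
    SGen T ε c z T = (c : ℂ) * (1 - z) := by
  have hw := re_wGen_pos hε hz
  have hw0 : wGen ε z ≠ 0 := fun h => by simp [h] at hw
  have hsum : aBarPlus ε c z + aBarMinus ε c z ≠ 0 := by
    rw [aBarPlus_add_aBarMinus]; exact mul_ne_zero two_ne_zero hw0
  have hden (t : ℝ) (ht : t ∈ Set.Icc 0 T) :
      aBarPlus ε c z * eBarPlus T ε z t + aBarMinus ε c z * eBarMinus T ε z t ≠ 0 := by
    simpa [eBarPlus, eBarMinus] using add_mul_exp_ne_zero (τ := T - t) hw (sub_nonneg.2 ht.2)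
      (norm_aBarMinus_le_norm_aBarPlus hε hc hz) hsum
  refine ⟨hden, fun t ht => ?_, SGen_self T ε c z hw0⟩
  rw [← wGen_sq]
  exact (hasDerivAt_SGen T ε c z (hden t ht)).hasDerivWithinAt

/-- Fix `z ∈ ℂ` with `|z| < 1`. The denominator `ā⁺ē_t⁺ + ā⁻ē_t⁻` never vanishes on `[0,T]`,
`t ↦ S_t` is differentiable with `(d/dt)S_t = (S_t)² − ε(1−z)`, and `S_T = c(1−z)`. -/
theorem generating_function_explicit_solution
    (T ε c : ℝ) (hT : 0 < T) (hε : 0 < ε) (hc : 0 ≤ c)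
    (z : ℂ) (hz : ‖z‖ < 1) :
    (∀ t ∈ Set.Icc (0:ℝ) T,
      aBarPlus ε c z * eBarPlus T ε z t + aBarMinus ε c z * eBarMinus T ε z t ≠ 0) ∧
    (∀ t ∈ Set.Icc (0:ℝ) T,
      HasDerivWithinAt (fun s : ℝ => SGen T ε c z s)
        ((SGen T ε c z t) ^ 2 - (ε : ℂ) * (1 - z)) (Set.Icc (0:ℝ) T) t) ∧
    SGen T ε c z T = (c : ℂ) * (1 - z) :=
  generating_function_explicit_solution_general T ε c hε hc z hz
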